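/- Let F, G, H : ℝ² → ℝ be continuously differentiable, let y : ℝ² → ℝ be twice continuously differentiable with ∂₁y(x,h) = F(x, y(x,h)) for all (x,h) in an open set D, and let I : ℝ² → ℝ be twice continuously differentiable with ∂₁I(x,h) = G(x, y(x,h)) on D. If ∂₂G = ∂₁H + F·∂₂H + H·∂₂F holds identically on the relevant open set, then for all (x,h) ∈ D, ∂₁[ ∂₂I(x,h) − H(x, y(x,h))·∂₂y(x,h) ] = 0; i.e. the sufficiency direction of the order-1 telescoper check: ∂_y G = D_x H + H·∂_y F implies that ∂_h I(x,h) = H(x, y(x,h))·∂_h y(x,h) holds up to a function of h alone. -/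

import Mathlib

/-!
Put `J = ∂₂I − H(x, y)·∂₂y`. Exchanging the order of differentiation in `∂₁∂₂I` and `∂₁∂₂y`
and using `∂₁I = G(x, y)`, `∂₁y = F(x, y)` gives `∂₁∂₂I = ∂₂G(x, y)·∂₂y` and
`∂₁∂₂y = ∂₂F(x, y)·∂₂y`, while the chain rule gives `∂₁[H(x, y)] = (∂₁H + F·∂₂H)(x, y)`.
Hence `∂₁J = (∂₂G − ∂₁H − F·∂₂H − H·∂₂F)(x, y)·∂₂y`, which vanishes by hypothesis.
-/

noncomputable section

/-- Partial derivative with respect to the first variable. -/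
def pd1 (f : ℝ × ℝ → ℝ) (p : ℝ × ℝ) : ℝ := deriv (fun t => f (t, p.2)) p.1

/-- Partial derivative with respect to the second variable. -/
def pd2 (f : ℝ × ℝ → ℝ) (p : ℝ × ℝ) : ℝ := deriv (fun t => f (p.1, t)) p.2

/-- The operator `D_x g = ∂₁ g + F · ∂₂ g`. -/
def Dx (F : ℝ × ℝ → ℝ) (g : ℝ × ℝ → ℝ) (p : ℝ × ℝ) : ℝ := pd1 g p + F p * pd2 g p

/-- The operator `D_h g = U⁻¹ · ∂₂ g`. -/
def Dh (U : ℝ × ℝ → ℝ) (g : ℝ × ℝ → ℝ) (p : ℝ × ℝ) : ℝ := (U p)⁻¹ * pd2 g p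

open Filter Topology

section PartialDerivatives

variable {f K y : ℝ × ℝ → ℝ} {p : ℝ × ℝ}

lemma hasDerivAt_pd1 (hf : DifferentiableAt ℝ f p) :
    HasDerivAt (fun t => f (t, p.2)) (pd1 f p) p.1 :=
  (hf.comp (𝕜 := ℝ) p.1 (differentiableAt_id.prodMk (differentiableAt_const p.2))).hasDerivAt

lemma hasDerivAt_pd2 (hf : DifferentiableAt ℝ f p) :
    HasDerivAt (fun t => f (p.1, t)) (pd2 f p) p.2 :=
  (hf.comp (𝕜 := ℝ) p.2 ((differentiableAt_const p.1).prodMk differentiableAt_id)).hasDerivAt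

lemma pd1_eq_fderiv (hf : DifferentiableAt ℝ f p) : pd1 f p = fderiv ℝ f p (1, 0) :=
  (hasDerivAt_pd1 hf).unique <| by
    simpa [Function.comp_def] using
      hf.hasFDerivAt.comp_hasDerivAt p.1 ((hasDerivAt_id p.1).prodMk (hasDerivAt_const p.1 p.2))

lemma pd2_eq_fderiv (hf : DifferentiableAt ℝ f p) : pd2 f p = fderiv ℝ f p (0, 1) :=
  (hasDerivAt_pd2 hf).unique <| by
    simpa [Function.comp_def] using
      hf.hasFDerivAt.comp_hasDerivAt p.2 ((hasDerivAt_const p.2 p.1).prodMk (hasDerivAt_id p.2))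

lemma fderiv_apply_eq_pd (hf : DifferentiableAt ℝ f p) (v : ℝ × ℝ) :
    fderiv ℝ f p v = v.1 * pd1 f p + v.2 * pd2 f p := by
  have hv : v = v.1 • ((1 : ℝ), (0 : ℝ)) + v.2 • ((0 : ℝ), (1 : ℝ)) := by simp
  rw [hv, map_add, map_smul, map_smul, ← pd1_eq_fderiv hf, ← pd2_eq_fderiv hf]
  simp

lemma hasDerivAt_comp_of_pd {γ : ℝ → ℝ × ℝ} {γ' : ℝ × ℝ} {t : ℝ}
    (hf : DifferentiableAt ℝ f (γ t)) (hγ : HasDerivAt γ γ' t) :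
    HasDerivAt (fun s => f (γ s)) (γ'.1 * pd1 f (γ t) + γ'.2 * pd2 f (γ t)) t := by
  have h := hf.hasFDerivAt.comp_hasDerivAt t hγ
  rwa [fderiv_apply_eq_pd hf] at h

lemma hasDerivAt_comp_graph (hK : DifferentiableAt ℝ K (p.1, y p)) (hy : DifferentiableAt ℝ y p) :
    HasDerivAt (fun t => K (t, y (t, p.2)))
      (pd1 K (p.1, y p) + pd2 K (p.1, y p) * pd1 y p) p.1 := by
  simpa [mul_comm] using hasDerivAt_comp_of_pd (γ := fun t => (t, y (t, p.2))) hK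
    ((hasDerivAt_id p.1).prodMk (hasDerivAt_pd1 hy))

lemma pd2_comp_graph (hK : DifferentiableAt ℝ K (p.1, y p)) (hy : DifferentiableAt ℝ y p) :
    pd2 (fun q => K (q.1, y q)) p = pd2 K (p.1, y p) * pd2 y p := by
  have h := hasDerivAt_comp_of_pd (γ := fun t => (p.1, y (p.1, t))) hK
    ((hasDerivAt_const p.2 p.1).prodMk (hasDerivAt_pd2 hy))
  rw [pd2, h.deriv]
  ring

lemma Filter.EventuallyEq.pd2_eq {g : ℝ × ℝ → ℝ} (h : f =ᶠ[𝓝 p] g) : pd2 f p = pd2 g p :=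
  EventuallyEq.deriv_eq <|
    (continuous_const.prodMk continuous_id).continuousAt.preimage_mem_nhds (x := p.2) h

end PartialDerivatives

section SecondOrder

variable {f : ℝ × ℝ → ℝ}

lemma pd2_eq_fderiv_fun (hf : ContDiff ℝ 2 f) : pd2 f = fun q => fderiv ℝ f q (0, 1) :=
  funext fun q => pd2_eq_fderiv (hf.differentiable (by norm_num) q)

lemma differentiable_fderiv_of_contDiff_two (hf : ContDiff ℝ 2 f) :
    Differentiable ℝ (fderiv ℝ f) :=
  (hf.fderiv_right (m := 1) (by norm_num)).differentiable one_ne_zero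

lemma differentiable_pd2 (hf : ContDiff ℝ 2 f) : Differentiable ℝ (pd2 f) := by
  rw [pd2_eq_fderiv_fun hf]
  exact fun q => (differentiable_fderiv_of_contDiff_two hf q).clm_apply (differentiableAt_const _)

lemma pd1_pd2_comm (hf : ContDiff ℝ 2 f) (p : ℝ × ℝ) : pd1 (pd2 f) p = pd2 (pd1 f) p := by
  have h2 := differentiable_fderiv_of_contDiff_two hf p
  have hpd1 : pd1 f = fun q => fderiv ℝ f q (1, 0) :=
    funext fun q => pd1_eq_fderiv (hf.differentiable (by norm_num) q)
  rw [pd2_eq_fderiv_fun hf, hpd1, pd1_eq_fderiv (h2.clm_apply (differentiableAt_const _)),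
    pd2_eq_fderiv (h2.clm_apply (differentiableAt_const _)),
    fderiv_clm_apply h2 (differentiableAt_const _), fderiv_clm_apply h2 (differentiableAt_const _)]
  simpa using (hf.contDiffAt.isSymmSndFDerivAt (by norm_num)) (1, 0) (0, 1)

lemma pd1_pd2_of_pd1_eventuallyEq_comp {K y : ℝ × ℝ → ℝ} {p : ℝ × ℝ} (hf : ContDiff ℝ 2 f)
    (hK : DifferentiableAt ℝ K (p.1, y p)) (hy : DifferentiableAt ℝ y p)
    (h : pd1 f =ᶠ[𝓝 p] fun q => K (q.1, y q)) :
    pd1 (pd2 f) p = pd2 K (p.1, y p) * pd2 y p := by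
  rw [pd1_pd2_comm hf, h.pd2_eq, pd2_comp_graph hK hy]

end SecondOrder

/-- sufficiency of the order-1 telescoper check: if
`∂₂G = ∂₁H + F·∂₂H + H·∂₂F` identically, then
`∂₁[∂₂I(x,h) − H(x, y(x,h))·∂₂y(x,h)] = 0` on `D`. -/
theorem telescoper_order1_check (F G H : ℝ × ℝ → ℝ)
    (hF : ContDiff ℝ 1 F) (hG : ContDiff ℝ 1 G) (hH : ContDiff ℝ 1 H)
    (D : Set (ℝ × ℝ)) (hD : IsOpen D)
    (y : ℝ × ℝ → ℝ) (hy : ContDiff ℝ 2 y)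
    (hy1 : ∀ p ∈ D, pd1 y p = F (p.1, y p))
    (I : ℝ × ℝ → ℝ) (hI : ContDiff ℝ 2 I)
    (hI1 : ∀ p ∈ D, pd1 I p = G (p.1, y p))
    (hrel : ∀ q : ℝ × ℝ, pd2 G q = pd1 H q + F q * pd2 H q + H q * pd2 F q) :
    ∀ p ∈ D, pd1 (fun q => pd2 I q - H (q.1, y q) * pd2 y q) p = 0 := by
  intro p hp
  have hyp : DifferentiableAt ℝ y p := hy.differentiable (by norm_num) p
  have hnear : ∀ᶠ q in 𝓝 p, q ∈ D := hD.mem_nhds hp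
  have hIxh : pd1 (pd2 I) p = pd2 G (p.1, y p) * pd2 y p :=
    pd1_pd2_of_pd1_eventuallyEq_comp hI (hG.differentiable one_ne_zero _) hyp (hnear.mono hI1)
  have hyxh : pd1 (pd2 y) p = pd2 F (p.1, y p) * pd2 y p :=
    pd1_pd2_of_pd1_eventuallyEq_comp hy (hF.differentiable one_ne_zero _) hyp (hnear.mono hy1)
  have hJ := (hasDerivAt_pd1 (differentiable_pd2 hI p)).fun_sub
    ((hasDerivAt_comp_graph (hH.differentiable one_ne_zero _) hyp).fun_mul
      (hasDerivAt_pd1 (differentiable_pd2 hy p)))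
  rw [pd1, hJ.deriv, hIxh, hyxh, hy1 p hp, hrel]
  ring
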